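/- DF-reduction preserves regularity: if 𝓜 is a regular collection of channel sets and 𝓜 DF-reduces to 𝓜' via some channel ch, then 𝓜' is also a regular collection of channel sets; moreover, the union of the sets in 𝓜' equals the union of the sets in 𝓜 with ch and d ch removed. -/

import Mathlib

/-- `𝓜` DF-reduces to `𝓜'` via channel `ch`: there are two distinct member
occurrences `M₁`, `M₂` in `𝓜` with `ch ∈ M₁` and `d ch ∈ M₂`, and `𝓜'` is
obtained from `𝓜` by removing `M₁` and `M₂` and adding `(M₁ ∪ M₂) \ {ch, d ch}`. -/
def DFStepVia {α : Type*} [DecidableEq α] (d : α → α)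
    (𝓜 𝓜' : Multiset (Finset α)) (ch : α) : Prop :=
  ∃ M₁ M₂ : Finset α, M₁ ∈ 𝓜 ∧ M₂ ∈ 𝓜.erase M₁ ∧ ch ∈ M₁ ∧ d ch ∈ M₂ ∧
    𝓜' = ((M₁ ∪ M₂) \ {ch, d ch}) ::ₘ ((𝓜.erase M₁).erase M₂)

theorem DFStepVia.card_lt {α : Type*} [DecidableEq α] {d : α → α}
    {𝓜 𝓜' : Multiset (Finset α)} {ch : α}
    (h : DFStepVia d 𝓜 𝓜' ch) : Multiset.card 𝓜' < Multiset.card 𝓜 := by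
  obtain ⟨M₁, M₂, h₁, h₂, -, -, rfl⟩ := h
  have c₁ : Multiset.card (𝓜.erase M₁) < Multiset.card 𝓜 :=
    Multiset.card_erase_lt_of_mem h₁
  have c₂ : Multiset.card ((𝓜.erase M₁).erase M₂) < Multiset.card (𝓜.erase M₁) :=
    Multiset.card_erase_lt_of_mem h₂
  rw [Multiset.card_cons]
  omega

/-- A collection `𝓜` of channel sets is regular if its member sets are pairwise
disjoint and, for every channel `ch`, `ch` belongs to the union of the sets in
`𝓜` iff `d ch` does. -/
def Regular {α : Type*} [DecidableEq α] (d : α → α)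
    (𝓜 : Multiset (Finset α)) : Prop :=
  Multiset.Pairwise (fun M₁ M₂ => Disjoint M₁ M₂) 𝓜 ∧
    ∀ ch : α, ch ∈ 𝓜.sup ↔ d ch ∈ 𝓜.sup

/-- `𝓜` is DF-normal if it DF-reduces to no collection. -/
def DFNormal {α : Type*} [DecidableEq α] (d : α → α)
    (𝓜 : Multiset (Finset α)) : Prop :=
  ¬ ∃ 𝓜' ch, DFStepVia d 𝓜 𝓜' ch

/-- `𝓜` is DF-reducible if either every member set of `𝓜` is empty, or `𝓜` is
not DF-normal and every `𝓜'` to which `𝓜` DF-reduces is DF-reducible. -/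
def DFReducible {α : Type*} [DecidableEq α] (d : α → α)
    (𝓜 : Multiset (Finset α)) : Prop :=
  (∀ M ∈ 𝓜, M = ∅) ∨
    ((∃ 𝓜' ch, DFStepVia d 𝓜 𝓜' ch) ∧
      ∀ 𝓜' ch (h : DFStepVia d 𝓜 𝓜' ch), DFReducible d 𝓜')
termination_by Multiset.card 𝓜
decreasing_by exact h.card_lt

/-!
Write `𝓜 = M₁ ::ₘ M₂ ::ₘ rest`. Pairwise disjointness makes `M₁ ⊔ M₂` disjoint from `rest.sup`,
so anything below `M₁ ⊔ M₂` may replace the pair; in particular `{ch, d ch} ≤ M₁ ⊔ M₂` misses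
`rest.sup`, so deleting it from the merged set deletes it from the whole union. That union stays
closed under `d` because `{ch, d ch}` is itself a `d`-orbit.
-/

namespace Multiset

theorem pairwise_cons {α : Type*} {r : α → α → Prop} [Std.Symm r] {a : α} {s : Multiset α} :
    Pairwise r (a ::ₘ s) ↔ (∀ b ∈ s, r a b) ∧ Pairwise r s := by
  induction s using Quotient.inductionOn with
  | h l =>
    rw [quot_mk_to_coe, cons_coe, pairwise_coe_iff_pairwise, pairwise_coe_iff_pairwise,
      List.pairwise_cons]
    rfl

section DistribLattice

variable {α : Type*} [DistribLattice α] [OrderBot α] {a b c : α} {s : Multiset α}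

theorem disjoint_sup_right : Disjoint a s.sup ↔ ∀ b ∈ s, Disjoint a b := by
  induction s using Multiset.induction with
  | empty => simp
  | cons b s ih => simp [_root_.disjoint_sup_right, ih]

theorem pairwise_disjoint_cons :
    Pairwise Disjoint (a ::ₘ s) ↔ Disjoint a s.sup ∧ Pairwise Disjoint s := by
  rw [pairwise_cons, disjoint_sup_right]

theorem Pairwise.disjoint_sup_sup (h : Pairwise Disjoint (a ::ₘ b ::ₘ s)) :
    Disjoint (a ⊔ b) s.sup := by
  obtain ⟨ha, hb⟩ := pairwise_disjoint_cons.1 h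
  rw [sup_cons] at ha
  exact _root_.disjoint_sup_left.2 ⟨ha.mono_right le_sup_right, (pairwise_disjoint_cons.1 hb).1⟩

theorem Pairwise.merge (h : Pairwise Disjoint (a ::ₘ b ::ₘ s)) (hc : c ≤ a ⊔ b) :
    Pairwise Disjoint (c ::ₘ s) :=
  pairwise_disjoint_cons.2
    ⟨h.disjoint_sup_sup.mono_left hc, (pairwise_disjoint_cons.1 (pairwise_disjoint_cons.1 h).2).2⟩

end DistribLattice

theorem Pairwise.sup_merge_sdiff {α : Type*} [GeneralizedBooleanAlgebra α] {a b t : α}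
    {s : Multiset α} (h : Pairwise Disjoint (a ::ₘ b ::ₘ s)) (ht : t ≤ a ⊔ b) :
    ((a ⊔ b) \ t ::ₘ s).sup = (a ::ₘ b ::ₘ s).sup \ t := by
  have hs : Disjoint s.sup t := (h.disjoint_sup_sup.mono_left ht).symm
  rw [sup_cons, sup_cons, sup_cons, ← sup_assoc, sup_sdiff (c := t) (a := a ⊔ b), hs.sdiff_eq_left]

end Multiset

theorem Function.Involutive.mem_sdiff_pair_iff {α : Type*} [DecidableEq α] {d : α → α}
    (hd : Function.Involutive d) {U : Finset α} (hU : ∀ x, x ∈ U ↔ d x ∈ U) (c x : α) :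
    x ∈ U \ {c, d c} ↔ d x ∈ U \ {c, d c} := by
  simp only [Finset.mem_sdiff, Finset.mem_insert, Finset.mem_singleton]
  rw [← hU x, hd.eq_iff, hd.injective.eq_iff]
  tauto

theorem DFStepVia.exists_cons_cons {α : Type*} [DecidableEq α] {d : α → α}
    {𝓜 𝓜' : Multiset (Finset α)} {ch : α} (h : DFStepVia d 𝓜 𝓜' ch) :
    ∃ M₁ M₂ rest, 𝓜 = M₁ ::ₘ M₂ ::ₘ rest ∧ ch ∈ M₁ ∧ d ch ∈ M₂ ∧
      𝓜' = ((M₁ ∪ M₂) \ {ch, d ch}) ::ₘ rest := by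
  obtain ⟨M₁, M₂, h₁, h₂, hch, hdch, rfl⟩ := h
  exact ⟨M₁, M₂, _, by rw [Multiset.cons_erase h₂, Multiset.cons_erase h₁], hch, hdch, rfl⟩

theorem DFStepVia.regular_general {α : Type*} [DecidableEq α] (d : α → α)
    (hinv : Function.Involutive d)
    (𝓜 𝓜' : Multiset (Finset α)) (hreg : Regular d 𝓜)
    (ch : α) (hstep : DFStepVia d 𝓜 𝓜' ch) :
    Regular d 𝓜' ∧ 𝓜'.sup = 𝓜.sup \ {ch, d ch} := by
  obtain ⟨M₁, M₂, rest, rfl, hch, hdch, rfl⟩ := hstep.exists_cons_cons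
  obtain ⟨hdisj, hclosed⟩ := hreg
  have hpair : {ch, d ch} ⊆ M₁ ∪ M₂ :=
    Finset.insert_subset (Finset.mem_union_left _ hch)
      (Finset.singleton_subset_iff.2 (Finset.mem_union_right _ hdch))
  have hsup := hdisj.sup_merge_sdiff hpair
  exact ⟨⟨hdisj.merge sdiff_le, fun x => hsup ▸ hinv.mem_sdiff_pair_iff hclosed ch x⟩, hsup⟩

/-- DF-reduction preserves regularity, and the union of the resulting
collection equals the union of the original one with `ch` and `d ch`
removed. -/
theorem DFStepVia.regular {α : Type*} [DecidableEq α] (d : α → α)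
    (hinv : Function.Involutive d) (hfpf : ∀ ch : α, d ch ≠ ch)
    (𝓜 𝓜' : Multiset (Finset α)) (hne : 𝓜 ≠ 0) (hreg : Regular d 𝓜)
    (ch : α) (hstep : DFStepVia d 𝓜 𝓜' ch) :
    Regular d 𝓜' ∧ 𝓜'.sup = 𝓜.sup \ {ch, d ch} :=
  DFStepVia.regular_general d hinv 𝓜 𝓜' hreg ch hstep
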